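/- Let C = max_{1≤i≤N} C_i. Then P̄_cor^opt(C) = C, the POVM with M_0 = I and M_i = 0 for i ≥ 1 is optimal for inconclusive degree q = C, and hence 1 ∈ P_I(C). -/

import Mathlib

/-!
Conjugating `C • I - ρ̄_i ≥ 0` by `S = ρ₀^{1/2}` gives `q_i ρ_i ≤ C ρ₀` in the Loewner order, so
every conclusive term satisfies `q_i tr(ρ_i M_i) ≤ C tr(ρ₀ M_i)` and hence
`P̄_cor ≤ C tr(ρ₀ ∑_j M_j) = C tr ρ₀ = C` for every POVM. The POVM that always answers
"inconclusive" attains `C` and has `P_I = tr ρ₀ = 1`.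
-/

open Matrix ComplexOrder

noncomputable section

namespace FRIR

variable {d N : ℕ}

/-- A POVM with `N+1` outcomes on a `d`-dimensional system: `M 0` is the
inconclusive outcome, `M i.succ` is the conclusive outcome for state `i`. -/
def IsPOVM (M : Fin (N + 1) → Matrix (Fin d) (Fin d) ℂ) : Prop :=
  (∀ i, (M i).PosSemidef) ∧ ∑ i, M i = 1

/-- `ρ₀ = ∑ i q_i ρ_i`. -/
def rho0 (q : Fin N → ℝ) (ρ : Fin N → Matrix (Fin d) (Fin d) ℂ) :
    Matrix (Fin d) (Fin d) ℂ :=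
  ∑ i, (q i : ℂ) • ρ i

/-- The probability of the inconclusive result, `P_I = tr(ρ₀ M₀)`. -/
def PIof (q : Fin N → ℝ) (ρ : Fin N → Matrix (Fin d) (Fin d) ℂ)
    (M : Fin (N + 1) → Matrix (Fin d) (Fin d) ℂ) : ℝ :=
  (Matrix.trace (rho0 q ρ * M 0)).re

/-- `P_cor = ∑ i q_i tr(ρ_i M_i)`. -/
def Pcor (q : Fin N → ℝ) (ρ : Fin N → Matrix (Fin d) (Fin d) ℂ)
    (M : Fin (N + 1) → Matrix (Fin d) (Fin d) ℂ) : ℝ :=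
  ∑ i : Fin N, q i * (Matrix.trace (ρ i * M i.succ)).re

/-- `P̄_cor = q·tr(ρ₀M₀) + ∑ i q_i tr(ρ_i M_i)`. -/
def PbarCor (qv : ℝ) (q : Fin N → ℝ) (ρ : Fin N → Matrix (Fin d) (Fin d) ℂ)
    (M : Fin (N + 1) → Matrix (Fin d) (Fin d) ℂ) : ℝ :=
  qv * PIof q ρ M + Pcor q ρ M

/-- `P̄_cor^opt(q)`: the maximal value of `P̄_cor` over all POVMs. -/
def PbarOpt (qv : ℝ) (q : Fin N → ℝ) (ρ : Fin N → Matrix (Fin d) (Fin d) ℂ) : ℝ :=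
  sSup {x : ℝ | ∃ M, IsPOVM M ∧ PbarCor qv q ρ M = x}

/-- `P_cor^opt(Q)`: the maximal value of `P_cor` over POVMs with `P_I = Q`. -/
def PcorOpt (Q : ℝ) (q : Fin N → ℝ) (ρ : Fin N → Matrix (Fin d) (Fin d) ℂ) : ℝ :=
  sSup {x : ℝ | ∃ M, IsPOVM M ∧ PIof q ρ M = Q ∧ Pcor q ρ M = x}

/-- `P_I(q) = { tr(ρ₀M₀) : POVMs attaining P̄_cor^opt(q) }`. -/
def PIset (qv : ℝ) (q : Fin N → ℝ) (ρ : Fin N → Matrix (Fin d) (Fin d) ℂ) : Set ℝ :=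
  {Q : ℝ | ∃ M, IsPOVM M ∧ PbarCor qv q ρ M = PbarOpt qv q ρ ∧ PIof q ρ M = Q}

section

variable {n 𝕜 : Type*} [RCLike 𝕜]

lemma _root_.Matrix.PosSemidef.smul_one_sub_of_le [DecidableEq n] {B : Matrix n n 𝕜} {c c' : ℝ}
    (hB : ((c : 𝕜) • (1 : Matrix n n 𝕜) - B).PosSemidef) (hc : c ≤ c') :
    ((c' : 𝕜) • (1 : Matrix n n 𝕜) - B).PosSemidef := by
  have hgap : ((c' - c) • (1 : Matrix n n 𝕜)).PosSemidef := .smul .one (sub_nonneg.2 hc)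
  convert hB.add hgap using 1
  rw [sub_smul, ← algebraMap_smul 𝕜 c', ← algebraMap_smul 𝕜 c]
  simp only [RCLike.algebraMap_eq_ofReal]
  abel

variable [Fintype n]

open scoped MatrixOrder in
lemma _root_.Matrix.PosSemidef.trace_mul_nonneg {A B : Matrix n n 𝕜} (hA : A.PosSemidef)
    (hB : B.PosSemidef) : 0 ≤ (A * B).trace := by
  classical
  obtain ⟨X, rfl⟩ := CStarAlgebra.nonneg_iff_eq_star_mul_self.mp hA.nonneg
  rw [mul_assoc, trace_mul_comm, mul_assoc, ← mul_assoc, star_eq_conjTranspose]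
  exact (hB.mul_mul_conjTranspose_same X).trace_nonneg

lemma _root_.Matrix.PosSemidef.re_trace_mul_le {X Y M : Matrix n n 𝕜}
    (hXY : (X - Y).PosSemidef) (hM : M.PosSemidef) :
    RCLike.re (Y * M).trace ≤ RCLike.re (X * M).trace := by
  have := (RCLike.nonneg_iff.mp (hXY.trace_mul_nonneg hM)).1
  rwa [sub_mul, trace_sub, map_sub, sub_nonneg] at this

lemma _root_.Matrix.PosSemidef.smul_sub_of_conj [DecidableEq n] {S R A B : Matrix n n 𝕜} {c : 𝕜}
    (hB : (c • (1 : Matrix n n 𝕜) - B).PosSemidef) (hS : S.IsHermitian) (hSS : S * S = R)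
    (hSBS : S * B * S = A) : (c • R - A).PosSemidef := by
  have := hB.conjTranspose_mul_mul_same S
  rwa [hS.eq, mul_sub, sub_mul, mul_smul_comm, mul_one, smul_mul_assoc, hSS, hSBS] at this

end

section

variable {q : Fin N → ℝ} {ρ : Fin N → Matrix (Fin d) (Fin d) ℂ}

lemma trace_rho0 (htr : ∀ i, (ρ i).trace = 1) (hqsum : ∑ i, q i = 1) :
    (rho0 q ρ).trace = 1 := by
  simp only [rho0, trace_sum, trace_smul, htr, smul_eq_mul, mul_one]
  exact_mod_cast hqsum

lemma PbarCor_le {c : ℝ} {M : Fin (N + 1) → Matrix (Fin d) (Fin d) ℂ}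
    (htr0 : (rho0 q ρ).trace = 1)
    (hbound : ∀ i, ((c : ℂ) • rho0 q ρ - (q i : ℂ) • ρ i).PosSemidef) (hM : IsPOVM M) :
    PbarCor c q ρ M ≤ c := by
  have hterm : ∀ i, q i * (ρ i * M i.succ).trace.re ≤ c * (rho0 q ρ * M i.succ).trace.re :=
    fun i => by simpa [smul_mul_assoc, trace_smul] using (hbound i).re_trace_mul_le (hM.1 i.succ)
  have htotal : ∑ j, (rho0 q ρ * M j).trace.re = 1 := by
    rw [← Complex.re_sum, ← trace_sum, ← Finset.mul_sum, hM.2, mul_one, htr0, Complex.one_re]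
  calc PbarCor c q ρ M
      ≤ c * (rho0 q ρ * M 0).trace.re + ∑ i : Fin N, c * (rho0 q ρ * M i.succ).trace.re :=
        add_le_add_right (Finset.sum_le_sum fun i _ => hterm i) _
    _ = c * ∑ j, (rho0 q ρ * M j).trace.re := by rw [Fin.sum_univ_succ, mul_add, Finset.mul_sum]
    _ = c := by rw [htotal, mul_one]

def inconclusivePOVM : Fin (N + 1) → Matrix (Fin d) (Fin d) ℂ :=
  fun i => if i = 0 then 1 else 0

lemma isPOVM_inconclusivePOVM :
    IsPOVM (inconclusivePOVM : Fin (N + 1) → Matrix (Fin d) (Fin d) ℂ) :=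
  ⟨fun i => by by_cases h : i = 0 <;> simp [inconclusivePOVM, h, PosSemidef.one, PosSemidef.zero],
    by simp [inconclusivePOVM]⟩

lemma PIof_inconclusivePOVM (htr0 : (rho0 q ρ).trace = 1) : PIof q ρ inconclusivePOVM = 1 := by
  simp [PIof, inconclusivePOVM, htr0]

lemma PbarCor_inconclusivePOVM {c : ℝ} (htr0 : (rho0 q ρ).trace = 1) :
    PbarCor c q ρ inconclusivePOVM = c := by
  simp [PbarCor, PIof_inconclusivePOVM htr0, Pcor, inconclusivePOVM]

lemma PbarOpt_eq {c : ℝ} (htr0 : (rho0 q ρ).trace = 1)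
    (hbound : ∀ i, ((c : ℂ) • rho0 q ρ - (q i : ℂ) • ρ i).PosSemidef) : PbarOpt c q ρ = c :=
  IsGreatest.csSup_eq ⟨⟨_, isPOVM_inconclusivePOVM, PbarCor_inconclusivePOVM htr0⟩,
    by rintro _ ⟨M, hM, rfl⟩; exact PbarCor_le htr0 hbound hM⟩

end

/-- `ρ̄_i = ρ₀^{-1/2}(q_iρ_i)ρ₀^{-1/2}` is encoded through the positive semidefinite square root
`S` of `ρ₀`, as `S * ρ̄_i * S = q_i ρ_i`. -/
theorem stmt4_general {d N : ℕ}
    (q : Fin N → ℝ) (ρ : Fin N → Matrix (Fin d) (Fin d) ℂ)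
    (hqsum : ∑ i, q i = 1)
    (htr : ∀ i, (ρ i).trace = 1)
    (S : Matrix (Fin d) (Fin d) ℂ) (hS : S.PosSemidef) (hSS : S * S = rho0 q ρ)
    (ρbar : Fin N → Matrix (Fin d) (Fin d) ℂ)
    (hρbar : ∀ i, S * ρbar i * S = (q i : ℂ) • ρ i)
    (C : Fin N → ℝ)
    (hCpsd : ∀ i, ((C i : ℂ) • (1 : Matrix (Fin d) (Fin d) ℂ) - ρbar i).PosSemidef)
    (Cmax : ℝ) (hCmax : IsGreatest (Set.range C) Cmax) :
    PbarOpt Cmax q ρ = Cmax ∧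
      IsPOVM (fun i : Fin (N + 1) =>
        if i = 0 then (1 : Matrix (Fin d) (Fin d) ℂ) else 0) ∧
      PbarCor Cmax q ρ (fun i : Fin (N + 1) =>
        if i = 0 then (1 : Matrix (Fin d) (Fin d) ℂ) else 0) = PbarOpt Cmax q ρ ∧
      (1 : ℝ) ∈ PIset Cmax q ρ := by
  have htr0 := trace_rho0 htr hqsum
  have hbound : ∀ i, ((Cmax : ℂ) • rho0 q ρ - (q i : ℂ) • ρ i).PosSemidef := fun i =>
    ((hCpsd i).smul_one_sub_of_le (hCmax.2 ⟨i, rfl⟩)).smul_sub_of_conj hS.isHermitian hSS (hρbar i)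
  have hopt := PbarOpt_eq htr0 hbound
  have hattained := (PbarCor_inconclusivePOVM htr0).trans hopt.symm
  exact ⟨hopt, isPOVM_inconclusivePOVM, hattained,
    _, isPOVM_inconclusivePOVM, hattained, PIof_inconclusivePOVM htr0⟩

/-- With `C = max_i C_i` (the largest of the maximum confidences),
`P̄_cor^opt(C) = C`, the POVM with `M₀ = I` and `M_i = 0` for `i ≥ 1` is optimal
for inconclusive degree `q = C`, and hence `1 ∈ P_I(C)`.

Here `ρ̄_i = ρ₀^{-1/2}(q_iρ_i)ρ₀^{-1/2}` is encoded via the positive semidefinite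
square root `S` of `ρ₀` (`S * ρ̄_i * S = q_i ρ_i`), and `C_i` being the largest
eigenvalue of `ρ̄_i` is encoded by: `C_i • I - ρ̄_i` is positive semidefinite but
not positive definite. -/
theorem stmt4 {d N : ℕ} (hd : 0 < d) (hN : 0 < N)
    (q : Fin N → ℝ) (ρ : Fin N → Matrix (Fin d) (Fin d) ℂ)
    (hq : ∀ i, 0 < q i) (hqsum : ∑ i, q i = 1)
    (hρ : ∀ i, (ρ i).PosSemidef) (htr : ∀ i, (ρ i).trace = 1)
    (hρ0 : (rho0 q ρ).PosDef)
    (S : Matrix (Fin d) (Fin d) ℂ) (hS : S.PosSemidef) (hSS : S * S = rho0 q ρ)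
    (ρbar : Fin N → Matrix (Fin d) (Fin d) ℂ)
    (hρbar : ∀ i, S * ρbar i * S = (q i : ℂ) • ρ i)
    (C : Fin N → ℝ)
    (hCpsd : ∀ i, ((C i : ℂ) • (1 : Matrix (Fin d) (Fin d) ℂ) - ρbar i).PosSemidef)
    (hCeig : ∀ i, ¬ ((C i : ℂ) • (1 : Matrix (Fin d) (Fin d) ℂ) - ρbar i).PosDef)
    (Cmax : ℝ) (hCmax : IsGreatest (Set.range C) Cmax) :
    PbarOpt Cmax q ρ = Cmax ∧
      IsPOVM (fun i : Fin (N + 1) =>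
        if i = 0 then (1 : Matrix (Fin d) (Fin d) ℂ) else 0) ∧
      PbarCor Cmax q ρ (fun i : Fin (N + 1) =>
        if i = 0 then (1 : Matrix (Fin d) (Fin d) ℂ) else 0) = PbarOpt Cmax q ρ ∧
      (1 : ℝ) ∈ PIset Cmax q ρ :=
  stmt4_general q ρ hqsum htr S hS hSS ρbar hρbar C hCpsd Cmax hCmax

end FRIR
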